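/- If X_0 is uniformly distributed on [0,1], b ≥ 2 is an integer, (ξ_i) are i.i.d. uniform on {0,...,b-1} independent of X_0, and X_h = b^{-h} X_0 + Σ_{s=1}^{h} b^{s-h-1} ξ_s, then for every y ∈ (0,1), P(X_h > y | X_0 > y) = b^{-h} Σ_{(j_1,...,j_h) ∈ {0,...,b-1}^h} min{1, (1-y)^{-1} (1 - y b^h + Σ_{s=1}^h j_s b^{s-1})_+ }, where (·)_+ denotes the positive part. -/

import Mathlib

open MeasureTheory ProbabilityTheory Finset
open scoped ENNReal

/-- For the AR(1) process with `X_0 ~ Uniform[0,1]`, `ξ_i` i.i.d. uniform on `{0,…,b-1}`,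
independent, and `X_h = b^{-h} X_0 + ∑_{s=1}^h b^{s-h-1} ξ_s`, for every `y ∈ (0,1)`,
`P(X_h > y | X_0 > y) = b^{-h} ∑_{(j_1,…,j_h)} min{1, (1-y)⁻¹ (1 - y b^h + ∑_s j_s b^{s-1})_+}`. -/
theorem ar1_cond_prob {Ω : Type*} [MeasurableSpace Ω] (μ : Measure Ω) [IsProbabilityMeasure μ]
    (b : ℕ) (hb : 2 ≤ b) (h : ℕ)
    (Z : ℕ → Ω → ℝ) (hmeas : ∀ i, Measurable (Z i))
    (hindep : iIndepFun Z μ)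
    (hX0 : Measure.map (Z 0) μ = volume.restrict (Set.Icc (0 : ℝ) 1))
    (hξ : ∀ i, 1 ≤ i → Measure.map (Z i) μ
      = (b : ℝ≥0∞)⁻¹ • ∑ j ∈ Finset.range b, Measure.dirac (j : ℝ))
    (Xh : Ω → ℝ)
    (hXh : ∀ ω, Xh ω = (b : ℝ) ^ (-(h : ℤ)) * Z 0 ω
      + ∑ s ∈ Finset.Icc 1 h, (b : ℝ) ^ ((s : ℤ) - (h : ℤ) - 1) * Z s ω)
    (y : ℝ) (hy : y ∈ Set.Ioo (0 : ℝ) 1) :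
    (ProbabilityTheory.cond μ {ω | y < Z 0 ω}) {ω | y < Xh ω}
      = ENNReal.ofReal ((b : ℝ) ^ (-(h : ℤ)) *
        ∑ j : Fin h → Fin b,
          min 1 ((1 - y)⁻¹ *
            max (1 - y * (b : ℝ) ^ h + ∑ s : Fin h, (j s : ℝ) * (b : ℝ) ^ (s : ℕ)) 0)) := by
  classical
  obtain ⟨hy0, hy1⟩ := hy
  have hb0 : (0:ℝ) < b := by positivity
  have hbne : (b:ℝ) ≠ 0 := ne_of_gt hb0
  have h1y : (0:ℝ) < 1 - y := by linarith
  -- key quantities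
  set c : (Fin h → Fin b) → ℝ :=
    fun j => y * (b:ℝ)^h - ∑ s : Fin h, (j s : ℝ) * (b:ℝ) ^ (s:ℕ) with hc
  set m : (Fin h → Fin b) → ℝ := fun j => max y (c j) with hm
  -- extension of j to ℕ
  set jn : (Fin h → Fin b) → ℕ → ℕ :=
    fun j i => if hi : i - 1 < h then (j ⟨i-1, hi⟩ : ℕ) else 0 with hjn
  have hjns : ∀ (j : Fin h → Fin b) (s : Fin h), jn j ((s:ℕ)+1) = (j s : ℕ) := by
    intro j s
    simp only [hjn, Nat.add_sub_cancel, s.isLt, dif_pos]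
  set sets : (Fin h → Fin b) → ℕ → Set ℝ :=
    fun j i => if i = 0 then Set.Ioi (m j) else {((jn j i : ℕ) : ℝ)} with hsets
  set T : Finset ℕ := insert 0 (Finset.Icc 1 h) with hT
  set E : (Fin h → Fin b) → Set Ω := fun j => ⋂ i ∈ T, Z i ⁻¹' sets j i with hE
  -- sum formula for Xh given the values of the ξ's
  have hsum : ∀ (j : Fin h → Fin b) (ω : Ω), (∀ s : Fin h, Z ((s:ℕ)+1) ω = (j s : ℝ)) →
      Xh ω = (b:ℝ) ^ (-(h:ℤ)) * (Z 0 ω + ∑ s : Fin h, (j s : ℝ) * (b:ℝ) ^ (s:ℕ)) := by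
    intro j ω hj
    rw [hXh ω, mul_add]
    congr 1
    rw [Finset.mul_sum]
    rw [← Finset.Ico_add_one_right_eq_Icc, Finset.sum_Ico_eq_sum_range, Nat.add_sub_cancel]
    rw [← Fin.sum_univ_eq_sum_range (fun i => ((b:ℝ))^(((1+i:ℕ):ℤ) - (h:ℤ) - 1) * Z (1+i) ω) h]
    refine Finset.sum_congr rfl fun s _ => ?_
    rw [show 1 + (s:ℕ) = (s:ℕ) + 1 from Nat.add_comm _ _, hj s]
    have hexp : (((s:ℕ)+1 : ℕ) : ℤ) - (h:ℤ) - 1 = -(h:ℤ) + (s:ℕ) := by push_cast; ring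
    rw [hexp, zpow_add₀ hbne, zpow_natCast]
    ring
  have hiff : ∀ (j : Fin h → Fin b) (ω : Ω), (∀ s : Fin h, Z ((s:ℕ)+1) ω = (j s : ℝ)) →
      (y < Xh ω ↔ c j < Z 0 ω) := by
    intro j ω hj
    rw [hsum j ω hj, show (b:ℝ)^(-(h:ℤ)) = ((b:ℝ)^h)⁻¹ by rw [zpow_neg, zpow_natCast],
      lt_inv_mul_iff₀ (by positivity)]
    constructor <;> intro H
    · simp only [hc]; linarith [H]
    · simp only [hc] at H; linarith [H]
  -- the good set
  set G : Set ℝ := ⋃ k : Fin b, {((k:ℕ):ℝ)} with hG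
  have hGfin : G.Finite := Set.finite_iUnion fun _ => Set.finite_singleton _
  have hGmeas : MeasurableSet G := hGfin.measurableSet
  set N : Set Ω := ⋃ s : Fin h, {ω | Z ((s:ℕ)+1) ω ∉ G} with hN
  have hNnull : μ N = 0 := by
    refine measure_iUnion_null fun s => ?_
    have h1 : (1:ℕ) ≤ (s:ℕ)+1 := Nat.le_add_left 1 _
    have : {ω | Z ((s:ℕ)+1) ω ∉ G} = Z ((s:ℕ)+1) ⁻¹' Gᶜ := rfl
    rw [this, ← Measure.map_apply (hmeas _) hGmeas.compl, hξ _ h1,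
      Measure.smul_apply, Measure.finset_sum_apply]
    have : ∀ l ∈ Finset.range b, Measure.dirac ((l:ℕ):ℝ) Gᶜ = 0 := by
      intro l hl
      rw [Measure.dirac_apply' _ hGmeas.compl]
      have : ((l:ℕ):ℝ) ∈ G := by
        refine Set.mem_iUnion.2 ⟨⟨l, Finset.mem_range.1 hl⟩, ?_⟩
        simp
      simp [Set.indicator_of_notMem, this]
    rw [Finset.sum_eq_zero this]
    simp
  -- membership characterization off N
  have hchar : ({ω | y < Xh ω} ∩ {ω | y < Z 0 ω}) \ N = (⋃ j, E j) \ N := by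
    ext ω
    simp only [Set.mem_diff, Set.mem_inter_iff, Set.mem_setOf_eq, Set.mem_iUnion]
    constructor
    · rintro ⟨⟨hXω, hZω⟩, hωN⟩
      refine ⟨?_, hωN⟩
      have hval : ∀ s : Fin h, ∃ k : Fin b, Z ((s:ℕ)+1) ω = ((k:ℕ):ℝ) := by
        intro s
        by_contra hcon
        push_neg at hcon
        exact hωN (Set.mem_iUnion.2 ⟨s, fun hmem => by
          obtain ⟨A, ⟨k, rfl⟩, hA⟩ := hmem
          exact hcon k hA⟩)
      choose j hj using hval
      refine ⟨j, ?_⟩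
      simp only [hE, Set.mem_iInter]
      intro i hi
      rcases Finset.mem_insert.1 hi with rfl | hi
      · simp only [hsets, if_pos rfl, Set.mem_preimage, Set.mem_Ioi, hm]
        exact max_lt hZω ((hiff j ω hj).1 hXω)
      · obtain ⟨hi1, hih⟩ := Finset.mem_Icc.1 hi
        have hi0 : i ≠ 0 := by omega
        simp only [hsets, if_neg hi0, Set.mem_preimage, Set.mem_singleton_iff]
        have hilt : i - 1 < h := by omega
        have hieq : (i - 1) + 1 = i := by omega
        have hthis := hj ⟨i - 1, hilt⟩
        simp only [hieq] at hthis
        have hji : jn j i = (j ⟨i-1, hilt⟩ : ℕ) := by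
          simp only [hjn]; rw [dif_pos hilt]
        rw [hthis, hji]
    · rintro ⟨⟨j, hj⟩, hωN⟩
      simp only [hE, Set.mem_iInter] at hj
      have hj' : ∀ s : Fin h, Z ((s:ℕ)+1) ω = (j s : ℝ) := by
        intro s
        have hmem : (s:ℕ)+1 ∈ T := by
          refine Finset.mem_insert_of_mem (Finset.mem_Icc.2 ⟨Nat.le_add_left 1 _, ?_⟩)
          omega
        have := hj _ hmem
        simp only [hsets, if_neg (Nat.succ_ne_zero _), Set.mem_preimage,
          Set.mem_singleton_iff, hjns] at this
        exact this
      have h0 := hj 0 (Finset.mem_insert_self 0 _)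
      simp only [hsets, if_pos rfl, Set.mem_preimage, Set.mem_Ioi, hm] at h0
      exact ⟨⟨(hiff j ω hj').2 (lt_of_le_of_lt (le_max_right _ _) h0),
        lt_of_le_of_lt (le_max_left _ _) h0⟩, hωN⟩
  -- measurability
  have hsetsmeas : ∀ (j : Fin h → Fin b) (i : ℕ), MeasurableSet (sets j i) := by
    intro j i
    by_cases hi : i = 0
    · simp only [hsets, if_pos hi]; exact measurableSet_Ioi
    · simp only [hsets, if_neg hi]; exact measurableSet_singleton _
  have hEmeas : ∀ j, MeasurableSet (E j) := fun j =>
    MeasurableSet.biInter T.countable_toSet fun i _ => (hmeas i) (hsetsmeas j i)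
  -- disjointness
  have hEdisj : Pairwise (Function.onFun Disjoint E) := by
    intro j j' hne
    obtain ⟨s, hs⟩ : ∃ s, j s ≠ j' s := Function.ne_iff.1 hne
    refine Set.disjoint_left.2 fun ω hω hω' => ?_
    simp only [hE, Set.mem_iInter] at hω hω'
    have hmem : (s:ℕ)+1 ∈ T := by
      refine Finset.mem_insert_of_mem (Finset.mem_Icc.2 ⟨Nat.le_add_left 1 _, ?_⟩)
      omega
    have h1 := hω _ hmem
    have h2 := hω' _ hmem
    simp only [hsets, if_neg (Nat.succ_ne_zero _), Set.mem_preimage,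
      Set.mem_singleton_iff, hjns] at h1 h2
    exact hs (Fin.ext (Nat.cast_injective (h1 ▸ h2 : ((j s : ℕ):ℝ) = ((j' s : ℕ):ℝ))))
  -- marginal computations
  have hIoi : ∀ t : ℝ, 0 ≤ t → μ (Z 0 ⁻¹' Set.Ioi t) = ENNReal.ofReal (1 - t) := by
    intro t ht
    rw [← Measure.map_apply (hmeas 0) measurableSet_Ioi, hX0,
      Measure.restrict_apply measurableSet_Ioi]
    have : Set.Ioi t ∩ Set.Icc (0:ℝ) 1 = Set.Ioc t 1 := by
      ext x
      simp only [Set.mem_inter_iff, Set.mem_Ioi, Set.mem_Icc, Set.mem_Ioc]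
      constructor
      · rintro ⟨h1, _, h3⟩; exact ⟨h1, h3⟩
      · rintro ⟨h1, h2⟩; exact ⟨h1, le_of_lt (lt_of_le_of_lt ht h1), h2⟩
    rw [this, Real.volume_Ioc]
  have hsingle : ∀ i, 1 ≤ i → ∀ k : ℕ, k < b → μ (Z i ⁻¹' {(k:ℝ)}) = (b:ℝ≥0∞)⁻¹ := by
    intro i hi k hk
    rw [← Measure.map_apply (hmeas i) (measurableSet_singleton _), hξ i hi,
      Measure.smul_apply, Measure.finset_sum_apply]
    have : ∑ l ∈ Finset.range b, Measure.dirac ((l:ℕ):ℝ) {((k:ℕ):ℝ)} = 1 := by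
      rw [Finset.sum_eq_single k]
      · rw [Measure.dirac_apply' _ (measurableSet_singleton _)]
        simp
      · intro l hl hlk
        rw [Measure.dirac_apply' _ (measurableSet_singleton _)]
        have : ((l:ℕ):ℝ) ∉ ({((k:ℕ):ℝ)} : Set ℝ) := by
          simp only [Set.mem_singleton_iff]
          exact fun hh => hlk (Nat.cast_injective hh)
        simp [Set.indicator_of_notMem, this]
      · intro hk'
        exact absurd (Finset.mem_range.2 hk) hk'
    rw [this, smul_eq_mul, mul_one]
  -- measure of each E j
  have hEj : ∀ j, μ (E j) = ENNReal.ofReal (1 - m j) * ((b:ℝ≥0∞)⁻¹)^h := by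
    intro j
    have h0T : (0:ℕ) ∉ Finset.Icc 1 h := by simp
    rw [hE]
    rw [hindep.measure_inter_preimage_eq_mul T (sets := sets j)
      (fun i _ => hsetsmeas j i)]
    rw [hT, Finset.prod_insert h0T]
    have h1 : μ (Z 0 ⁻¹' sets j 0) = ENNReal.ofReal (1 - m j) := by
      simp only [hsets, if_pos rfl]
      exact hIoi (m j) (le_trans (le_of_lt hy0) (le_max_left _ _))
    have h2 : ∏ i ∈ Finset.Icc 1 h, μ (Z i ⁻¹' sets j i) = ((b:ℝ≥0∞)⁻¹)^h := by
      rw [Finset.prod_congr rfl (g := fun _ => (b:ℝ≥0∞)⁻¹) ?_]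
      · rw [Finset.prod_const, Nat.card_Icc]
        norm_num
      · intro i hi
        obtain ⟨hi1, hih⟩ := Finset.mem_Icc.1 hi
        have hi0 : i ≠ 0 := by omega
        simp only [hsets, if_neg hi0]
        exact hsingle i hi1 (jn j i) (by
          simp only [hjn]
          split
          · exact Fin.is_lt _
          · omega)
    rw [h1, h2]
  -- main measure computation
  have hmain : μ ({ω | y < Xh ω} ∩ {ω | y < Z 0 ω})
      = ∑ j : Fin h → Fin b, ENNReal.ofReal (1 - m j) * ((b:ℝ≥0∞)⁻¹)^h := by
    rw [← measure_diff_null hNnull, hchar, measure_diff_null hNnull,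
      measure_iUnion hEdisj hEmeas, tsum_fintype]
    exact Finset.sum_congr rfl fun j _ => hEj j
  -- conditional probability
  have hBmeas : MeasurableSet {ω | y < Z 0 ω} := (hmeas 0) measurableSet_Ioi
  have hB : μ {ω | y < Z 0 ω} = ENNReal.ofReal (1 - y) := hIoi y (le_of_lt hy0)
  rw [cond_apply hBmeas, hB, Set.inter_comm, hmain]
  -- real-number identity for the summands
  have hsummand : ∀ j : Fin h → Fin b,
      min 1 ((1 - y)⁻¹ * max (1 - y * (b:ℝ)^h + ∑ s : Fin h, (j s : ℝ) * (b:ℝ) ^ (s:ℕ)) 0)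
        = (1 - y)⁻¹ * max (1 - m j) 0 := by
    intro j
    have hMc : 1 - y * (b:ℝ)^h + ∑ s : Fin h, (j s : ℝ) * (b:ℝ) ^ (s:ℕ) = 1 - c j := by
      simp only [hc]; ring
    rw [hMc]
    have h1 : 1 - m j = min (1 - y) (1 - c j) := by
      simp only [hm]
      rcases max_cases y (c j) with ⟨he, hle⟩ | ⟨he, hlt⟩
      · rw [he, min_eq_left (by linarith)]
      · rw [he, min_eq_right (by linarith)]
    rw [h1]
    have h2 : max (min (1 - y) (1 - c j)) 0 = min (1 - y) (max (1 - c j) 0) := by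
      rw [max_comm, max_min_distrib_left, max_eq_right (le_of_lt h1y)]
      rw [max_comm]
    rw [h2, mul_min_of_nonneg _ _ (le_of_lt (inv_pos.2 h1y)), inv_mul_cancel₀ (ne_of_gt h1y)]
  have hnneg : ∀ j : Fin h → Fin b, (0:ℝ) ≤ (1 - y)⁻¹ * max (1 - m j) 0 :=
    fun j => mul_nonneg (le_of_lt (inv_pos.2 h1y)) (le_max_right _ _)
  -- rewrite RHS
  conv_rhs => rw [Finset.sum_congr rfl (fun j _ => hsummand j)]
  have hofmax : ∀ j, ENNReal.ofReal (1 - m j) = ENNReal.ofReal (max (1 - m j) 0) := by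
    intro j
    rcases le_total (1 - m j) 0 with hle | hle
    · rw [max_eq_right hle, ENNReal.ofReal_of_nonpos hle, ENNReal.ofReal_zero]
    · rw [max_eq_left hle]
  have hbpow : ENNReal.ofReal ((b:ℝ) ^ (-(h:ℤ))) = ((b:ℝ≥0∞)⁻¹)^h := by
    rw [show (b:ℝ)^(-(h:ℤ)) = ((b:ℝ)⁻¹)^h by rw [zpow_neg, zpow_natCast, inv_pow],
      ENNReal.ofReal_pow (by positivity), ENNReal.ofReal_inv_of_pos hb0,
      ENNReal.ofReal_natCast]
  rw [ENNReal.ofReal_mul (by positivity), hbpow, ← Finset.mul_sum,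
    ENNReal.ofReal_mul (le_of_lt (inv_pos.2 h1y)),
    ENNReal.ofReal_inv_of_pos h1y,
    ENNReal.ofReal_sum_of_nonneg (fun j _ => le_max_right _ _)]
  rw [Finset.sum_congr rfl (fun j _ => by rw [hofmax j])]
  rw [← Finset.sum_mul]
  ring
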